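/- arXiv:0710.4971 — 5 statements merged into one kernel-verified Lean document; each statement's English description precedes it below -/
import Mathlib

section
/- The quadratic Gaudin Hamiltonians commute: for pairwise distinct complex numbers z_1,…,z_n and an orthonormal basis {x_a} of a semisimple Lie algebra g with respect to the Killing form, the elements H_i = Σ_{k≠i} Σ_a x_a^{(i)} x_a^{(k)} / (z_i − z_k) of U(g)^{⊗n} satisfy H_i H_j = H_j H_i for all i,j. -/
/-!
Write `Ω i k = ∑ₐ xₐ⁽ⁱ⁾ xₐ⁽ᵏ⁾`, so that `H i = ∑_{k ≠ i} Ω i k / (zᵢ - zₖ)`. The `Ω i k` satisfy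
the infinitesimal braid relations: they are symmetric, commute when their slots are disjoint, and
obey the classical Yang–Baxter equation `⁅Ω i j, Ω i k + Ω j k⁆ = 0`, which is the invariance of
the Casimir element `∑ₐ xₐ ⊗ xₐ` under the adjoint action. Expanding `⁅H i, H j⁆`, only terms
involving a third slot `k` survive; by the Yang–Baxter equation each is a multiple of
`⁅Ω i j, Ω i k⁆`, and the three coefficients cancel by the partial fraction identity
`1/((zᵢ-zₖ)(zⱼ-zₖ)) - 1/((zᵢ-zₖ)(zⱼ-zᵢ)) - 1/((zᵢ-zⱼ)(zⱼ-zₖ)) = 0`.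
-/

open scoped TensorProduct PiTensorProduct
open Finset

namespace LinearMap.BilinForm

variable {R L ι : Type*} [CommRing R] [LieRing L] [LieAlgebra R L] [Fintype ι] [DecidableEq ι]
  {B : LinearMap.BilinForm R L} {b : Module.Basis ι R L}

lemma apply_basis_eq_repr (hb : ∀ a a', B (b a) (b a') = if a = a' then 1 else 0)
    (x : L) (e : ι) : B x (b e) = b.repr x e := by
  nth_rw 1 [← b.sum_repr x]
  simp only [map_sum, map_smul, LinearMap.sum_apply, LinearMap.smul_apply, hb, smul_eq_mul,
    mul_ite, mul_one, mul_zero, sum_ite_eq', mem_univ, if_true]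

lemma basis_apply_eq_repr (hb : ∀ a a', B (b a) (b a') = if a = a' then 1 else 0)
    (x : L) (e : ι) : B (b e) x = b.repr x e := by
  nth_rw 1 [← b.sum_repr x]
  simp only [map_sum, map_smul, hb, smul_eq_mul, mul_ite, mul_one, mul_zero, sum_ite_eq, mem_univ,
    if_true]

theorem sum_apply_lie_add_apply_lie_eq_zero {M : Type*} [AddCommGroup M] [Module R M]
    (hB : B.lieInvariant L) (hb : ∀ a a', B (b a) (b a') = if a = a' then 1 else 0)
    (φ : L →ₗ[R] L →ₗ[R] M) (x : L) :
    ∑ a, (φ ⁅x, b a⁆ (b a) + φ (b a) ⁅x, b a⁆) = 0 := by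
  have hleft (a : ι) : φ ⁅x, b a⁆ (b a) = ∑ e, B ⁅x, b a⁆ (b e) • φ (b e) (b a) := by
    nth_rw 1 [← b.sum_repr ⁅x, b a⁆]
    simp only [map_sum, map_smul, LinearMap.sum_apply, LinearMap.smul_apply,
      apply_basis_eq_repr hb]
  have hright (a : ι) : φ (b a) ⁅x, b a⁆ = -∑ e, B ⁅x, b e⁆ (b a) • φ (b a) (b e) := by
    nth_rw 1 [← b.sum_repr ⁅x, b a⁆]
    simp only [map_sum, map_smul, ← basis_apply_eq_repr hb, hB x, neg_smul, sum_neg_distrib,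
      neg_neg]
  simp only [sum_add_distrib, hleft, hright, sum_neg_distrib]
  rw [sum_comm (γ := ι), add_neg_cancel]

end LinearMap.BilinForm

structure IsInfinitesimalBraid {L ι : Type*} [LieRing L] (Ω : ι → ι → L) : Prop where
  symm : ∀ ⦃i j⦄, i ≠ j → Ω i j = Ω j i
  lie_eq_zero_of_disjoint :
    ∀ ⦃i j k l⦄, i ≠ j → i ≠ k → i ≠ l → j ≠ k → j ≠ l → k ≠ l → ⁅Ω i j, Ω k l⁆ = 0
  lie_add_eq_zero : ∀ ⦃i j k⦄, i ≠ j → i ≠ k → j ≠ k → ⁅Ω i j, Ω i k + Ω j k⁆ = 0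

lemma inv_sub_mul_inv_sub_sub {K : Type*} [Field K] {x y w : K} (hxy : x ≠ y) (hxw : x ≠ w)
    (hyw : y ≠ w) :
    (x - w)⁻¹ * (y - w)⁻¹ - (x - w)⁻¹ * (y - x)⁻¹ - (x - y)⁻¹ * (y - w)⁻¹ = 0 := by
  have := sub_ne_zero.mpr hxy
  have := sub_ne_zero.mpr hxw
  have := sub_ne_zero.mpr hyw
  have := sub_ne_zero.mpr hxy.symm
  field_simp
  ring

section Gaudin
variable {K L ι : Type*} [Field K] [LieRing L] [LieAlgebra K L] [Fintype ι] [DecidableEq ι]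

def gaudinHamiltonian (z : ι → K) (Ω : ι → ι → L) (i : ι) : L :=
  ∑ k ∈ univ.filter (· ≠ i), (z i - z k)⁻¹ • Ω i k

-- the diagonal term vanishes because `(0 : K)⁻¹ = 0`
lemma gaudinHamiltonian_eq_sum (z : ι → K) (Ω : ι → ι → L) (i : ι) :
    gaudinHamiltonian z Ω i = ∑ k, (z i - z k)⁻¹ • Ω i k :=
  sum_filter_of_ne fun k _ h hki => h (by simp [hki])

theorem IsInfinitesimalBraid.lie_gaudinHamiltonian_eq_zero {Ω : ι → ι → L}
    (hΩ : IsInfinitesimalBraid Ω) {z : ι → K} (hz : Function.Injective z) (i j : ι) :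
    ⁅gaudinHamiltonian z Ω i, gaudinHamiltonian z Ω j⁆ = 0 := by
  rcases eq_or_ne i j with rfl | hij
  · exact lie_self _
  set F : ι → ι → L := fun k l => ((z i - z k)⁻¹ * (z j - z l)⁻¹) • ⁅Ω i k, Ω j l⁆
  have hexpand : ⁅gaudinHamiltonian z Ω i, gaudinHamiltonian z Ω j⁆ = ∑ k, ∑ l, F k l := by
    rw [gaudinHamiltonian_eq_sum, gaudinHamiltonian_eq_sum, sum_lie]
    refine sum_congr rfl fun k _ => ?_
    rw [smul_lie, lie_sum, smul_sum]
    simp only [lie_smul, smul_smul, F]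
  have hF_left (l : ι) : F i l = 0 := by simp [F]
  have hF_right (k : ι) : F k j = 0 := by simp [F]
  have hF_swap : F j i = 0 := by simp [F, hΩ.symm hij.symm]
  have hF_disjoint {k l : ι} (hki : k ≠ i) (hlj : l ≠ j) (hli : l ≠ i) (hkj : k ≠ j)
      (hkl : k ≠ l) : F k l = 0 := by
    simp [F, hΩ.lie_eq_zero_of_disjoint hki.symm hij hli.symm hkj hkl hlj.symm]
  have hsupport (k l : ι) : F k l = (if l = i then F k l else 0) +
      (if k = j then F k l else 0) + (if k = l then F k l else 0) := by
    by_cases hki : k = i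
    · subst hki; simp [hF_left]
    by_cases hlj : l = j
    · subst hlj; simp [hF_right]
    split_ifs <;> subst_vars <;> simp_all
  have hcancel (k : ι) : F k i + F j k + F k k = 0 := by
    by_cases hki : k = i
    · simp [hki, hF_left, hF_swap]
    by_cases hkj : k = j
    · simp [hkj, hF_right, hF_swap]
    have hik : i ≠ k := Ne.symm hki
    have hjk : j ≠ k := Ne.symm hkj
    have h1 : ⁅Ω i k, Ω j i⁆ = -⁅Ω i j, Ω i k⁆ := by rw [hΩ.symm hij.symm, lie_skew]
    have h2 : ⁅Ω i j, Ω j k⁆ = -⁅Ω i j, Ω i k⁆ :=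
      eq_neg_of_add_eq_zero_right (by rw [← lie_add, hΩ.lie_add_eq_zero hij hik hjk])
    have h3 : ⁅Ω i k, Ω j k⁆ = ⁅Ω i j, Ω i k⁆ := by
      have := hΩ.lie_add_eq_zero hik hij hkj
      rw [lie_add, hΩ.symm hkj, add_eq_zero_iff_neg_eq, lie_skew] at this
      exact this.symm
    have hcoeff := inv_sub_mul_inv_sub_sub (hz.ne hij) (hz.ne hik) (hz.ne hjk)
    simp only [F, h1, h2, h3]
    linear_combination (norm := module) hcoeff • ⁅Ω i j, Ω i k⁆
  calc ⁅gaudinHamiltonian z Ω i, gaudinHamiltonian z Ω j⁆ = ∑ k, ∑ l, F k l := hexpand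
    _ = ∑ k, (F k i + F j k + F k k) := by
      conv_lhs => enter [2, k, 2, l]; rw [hsupport k l]
      simp only [sum_add_distrib, sum_ite_eq, sum_ite_eq', sum_ite_irrel, sum_const_zero, mem_univ,
        if_true]
    _ = 0 := sum_eq_zero fun k _ => hcancel k

end Gaudin

section AssociativeLie

attribute [local instance] LieRing.ofAssociativeRing

section Ring
variable {T : Type*} [Ring T]

lemma lie_mul_mul_eq_lie_mul {p q p' r : T} (hqp' : Commute q p') (hpr : Commute p r)
    (hqr : Commute q r) : ⁅p * q, p' * r⁆ = ⁅p, p'⁆ * (q * r) := by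
  rw [Ring.lie_def, Ring.lie_def, sub_mul]
  congr 1
  · rw [mul_assoc, hqp'.left_comm, ← mul_assoc]
  · rw [mul_assoc, hpr.symm.left_comm, hqr.symm.eq, ← mul_assoc]

lemma lie_mul_mul_eq_mul_lie_mul {p q q' r : T} (hpq' : Commute p q') (hpr : Commute p r)
    (hqr : Commute q r) : ⁅p * q, q' * r⁆ = p * (⁅q, q'⁆ * r) := by
  rw [Ring.lie_def, Ring.lie_def, sub_mul, mul_sub]
  congr 1
  · simp only [mul_assoc]
  · rw [mul_assoc, hpr.symm.left_comm, hqr.symm.eq, ← mul_assoc, hpq'.symm.eq]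
    simp only [mul_assoc]

end Ring

section Casimir
variable {K g T ι : Type*} [CommRing K] [LieRing g] [LieAlgebra K g] [Ring T] [Algebra K T]
  [Fintype ι]

def casimir (b : ι → g) (P Q : g →ₗ⁅K⁆ T) : T := ∑ a, P (b a) * Q (b a)

variable {b : ι → g} {P Q R S : g →ₗ⁅K⁆ T}

lemma casimir_comm (hPQ : ∀ x y, Commute (P x) (Q y)) : casimir b P Q = casimir b Q P :=
  sum_congr rfl fun _ _ => (hPQ _ _).eq

lemma lie_casimir_casimir_eq_zero (hPR : ∀ x y, Commute (P x) (R y))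
    (hPS : ∀ x y, Commute (P x) (S y)) (hQR : ∀ x y, Commute (Q x) (R y))
    (hQS : ∀ x y, Commute (Q x) (S y)) : ⁅casimir b P Q, casimir b R S⁆ = 0 := by
  simp only [casimir, sum_lie, lie_sum]
  refine sum_eq_zero fun _ _ => sum_eq_zero fun _ _ => commute_iff_lie_eq.mp ?_
  exact ((hPR _ _).mul_right (hPS _ _)).mul_left ((hQR _ _).mul_right (hQS _ _))

theorem lie_casimir_add_casimir_eq_zero [DecidableEq ι] {B : LinearMap.BilinForm K g}
    {b : Module.Basis ι K g} (hB : B.lieInvariant g)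
    (hb : ∀ a a', B (b a) (b a') = if a = a' then 1 else 0)
    (hPQ : ∀ x y, Commute (P x) (Q y)) (hPR : ∀ x y, Commute (P x) (R y))
    (hQR : ∀ x y, Commute (Q x) (R y)) :
    ⁅casimir b P Q, casimir b P R + casimir b Q R⁆ = 0 := by
  have hexpand : ⁅casimir b P Q, casimir b P R + casimir b Q R⁆ =
      ∑ c, ∑ a, -((P ⁅b c, b a⁆ * Q (b a) + P (b a) * Q ⁅b c, b a⁆) * R (b c)) := by
    simp only [casimir, lie_add, sum_lie, lie_sum, ← sum_add_distrib]
    refine sum_congr rfl fun c _ => sum_congr rfl fun a _ => ?_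
    rw [lie_mul_mul_eq_lie_mul (hPQ _ _).symm (hPR _ _) (hQR _ _),
      lie_mul_mul_eq_mul_lie_mul (hPQ _ _) (hPR _ _) (hQR _ _), ← LieHom.map_lie, ← LieHom.map_lie,
      ← lie_skew (b c) (b a), map_neg, map_neg]
    noncomm_ring
  have hinv (c : ι) := (LinearMap.BilinForm.sum_apply_lie_add_apply_lie_eq_zero hB hb
    ((LinearMap.mul K T).compl₁₂ P.toLinearMap Q.toLinearMap) (b c))
  simp only [LinearMap.compl₁₂_apply, LieHom.coe_toLinearMap, LinearMap.mul_apply'] at hinv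
  rw [hexpand]
  simp only [← neg_mul, ← sum_mul, sum_neg_distrib, hinv, neg_zero, zero_mul, sum_const_zero]

theorem isInfinitesimalBraid_casimir [DecidableEq ι] {B : LinearMap.BilinForm K g}
    {b : Module.Basis ι K g} (hB : B.lieInvariant g)
    (hb : ∀ a a', B (b a) (b a') = if a = a' then 1 else 0) {κ : Type*} {ρ : κ → g →ₗ⁅K⁆ T}
    (hρ : Pairwise fun i k => ∀ x y, Commute (ρ i x) (ρ k y)) :
    IsInfinitesimalBraid fun i k => casimir b (ρ i) (ρ k) where
  symm _ _ hij := casimir_comm (hρ hij)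
  lie_eq_zero_of_disjoint _ _ _ _ _ hik hil hjk hjl _ :=
    lie_casimir_casimir_eq_zero (hρ hik) (hρ hil) (hρ hjk) (hρ hjl)
  lie_add_eq_zero _ _ _ hij hik hjk :=
    lie_casimir_add_casimir_eq_zero hB hb (hρ hij) (hρ hik) (hρ hjk)

end Casimir

lemma PiTensorProduct.commute_singleAlgHom {R ι : Type*} {A : ι → Type*} [CommSemiring R]
    [∀ i, Semiring (A i)] [∀ i, Algebra R (A i)] [DecidableEq ι] {i j : ι} (hij : i ≠ j)
    (x : A i) (y : A j) : Commute (singleAlgHom (R := R) i x) (singleAlgHom (R := R) j y) :=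
  (Pi.mulSingle_commute hij x y).map (tprodMonoidHom R)

end AssociativeLie

open Classical in
theorem gaudin_hamiltonians_commute_general
    (g : Type*) [LieRing g] [LieAlgebra ℂ g]
    (ι : Type*) [Fintype ι] (b : Module.Basis ι ℂ g)
    (hb : ∀ a a' : ι, killingForm ℂ g (b a) (b a') = if a = a' then 1 else 0)
    (n : ℕ) (z : Fin n → ℂ) (hz : Function.Injective z)
    (X : ι → Fin n → ⨂[ℂ] (_ : Fin n), UniversalEnvelopingAlgebra ℂ g)
    (hX : ∀ a i, X a i = PiTensorProduct.tprod ℂ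
      (Function.update (fun _ => (1 : UniversalEnvelopingAlgebra ℂ g)) i
        (UniversalEnvelopingAlgebra.ι ℂ (b a))))
    (H : Fin n → ⨂[ℂ] (_ : Fin n), UniversalEnvelopingAlgebra ℂ g)
    (hH : ∀ i, H i = ∑ k ∈ Finset.univ.filter (· ≠ i), ∑ a : ι,
      (z i - z k)⁻¹ • (X a i * X a k)) :
    ∀ i j, H i * H j = H j * H i := by
  classical
  let _ : LieRing (UniversalEnvelopingAlgebra ℂ g) := LieRing.ofAssociativeRing
  let _ : LieRing (⨂[ℂ] (_ : Fin n), UniversalEnvelopingAlgebra ℂ g) := LieRing.ofAssociativeRing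
  let ρ : Fin n → g →ₗ⁅ℂ⁆ ⨂[ℂ] (_ : Fin n), UniversalEnvelopingAlgebra ℂ g :=
    fun i => (PiTensorProduct.singleAlgHom (R := ℂ) (A := fun _ => UniversalEnvelopingAlgebra ℂ g)
      i).toLieHom.comp (UniversalEnvelopingAlgebra.ι ℂ)
  have hΩ : IsInfinitesimalBraid fun i k => casimir b (ρ i) (ρ k) :=
    isInfinitesimalBraid_casimir (LieModule.traceForm_lieInvariant ℂ g g) hb
      fun _ _ hik _ _ => PiTensorProduct.commute_singleAlgHom hik _ _
  have hH_eq : H = gaudinHamiltonian z fun i k => casimir b (ρ i) (ρ k) := by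
    funext i
    rw [hH]
    refine sum_congr rfl fun k _ => ?_
    simp only [casimir, smul_sum, hX]
    rfl
  intro i j
  exact commute_iff_lie_eq.mpr (hH_eq ▸ hΩ.lie_gaudinHamiltonian_eq_zero hz i j)

open Classical in
/-- The quadratic Gaudin Hamiltonians pairwise commute. -/
theorem gaudin_hamiltonians_commute
    (g : Type*) [LieRing g] [LieAlgebra ℂ g] [Module.Finite ℂ g]
    [LieAlgebra.IsSemisimple ℂ g]
    (ι : Type*) [Fintype ι] (b : Module.Basis ι ℂ g)
    (hb : ∀ a a' : ι, killingForm ℂ g (b a) (b a') = if a = a' then 1 else 0)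
    (n : ℕ) (z : Fin n → ℂ) (hz : Function.Injective z)
    (X : ι → Fin n → ⨂[ℂ] (_ : Fin n), UniversalEnvelopingAlgebra ℂ g)
    (hX : ∀ a i, X a i = PiTensorProduct.tprod ℂ
      (Function.update (fun _ => (1 : UniversalEnvelopingAlgebra ℂ g)) i
        (UniversalEnvelopingAlgebra.ι ℂ (b a))))
    (H : Fin n → ⨂[ℂ] (_ : Fin n), UniversalEnvelopingAlgebra ℂ g)
    (hH : ∀ i, H i = ∑ k ∈ Finset.univ.filter (· ≠ i), ∑ a : ι,
      (z i - z k)⁻¹ • (X a i * X a k)) :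
    ∀ i j, H i * H j = H j * H i :=
  gaudin_hamiltonians_commute_general g ι b hb n z hz X hX H hH
end

section
/- The symmetric group Gaudin Hamiltonians H_i = Σ_{j≠i} (i j)/(z_i − z_j) ∈ ℂ[S_n] pairwise commute, for any pairwise distinct complex numbers z_1,…,z_n. -/
lemma swap_helper1 {α : Type*} [DecidableEq α] {a b c : α}
    (hab : a ≠ b) (hac : a ≠ c) (hbc : b ≠ c) :
    Equiv.swap a c * Equiv.swap b a = Equiv.swap a b * Equiv.swap b c := by
  ext x
  simp only [Equiv.Perm.mul_apply, Equiv.swap_apply_def]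
  split_ifs <;> simp_all

lemma swap_helper2 {α : Type*} [DecidableEq α] {a b c : α}
    (hab : a ≠ b) (hac : a ≠ c) (hbc : b ≠ c) :
    Equiv.swap a c * Equiv.swap b c = Equiv.swap b c * Equiv.swap a b := by
  ext x
  simp only [Equiv.Perm.mul_apply, Equiv.swap_apply_def]
  split_ifs <;> simp_all

lemma swap_commute' {α : Type*} [DecidableEq α] {a b c d : α}
    (h1 : a ≠ c) (h2 : a ≠ d) (h3 : b ≠ c) (h4 : b ≠ d) :
    Equiv.swap a b * Equiv.swap c d = Equiv.swap c d * Equiv.swap a b := by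
  ext x
  simp only [Equiv.Perm.mul_apply, Equiv.swap_apply_def]
  split_ifs <;> simp_all

open Classical in
/-- The symmetric-group Gaudin Hamiltonians `H_i = Σ_{j≠i} (i j)/(z_i - z_j)`
pairwise commute in `ℂ[S_n]`. -/
theorem symmetric_group_gaudin_commute
    (n : ℕ) (z : Fin n → ℂ) (hz : Function.Injective z)
    (H : Fin n → MonoidAlgebra ℂ (Equiv.Perm (Fin n)))
    (hH : ∀ i, H i = ∑ j ∈ Finset.univ.filter (· ≠ i),
      (z i - z j)⁻¹ • MonoidAlgebra.of ℂ (Equiv.Perm (Fin n)) (Equiv.swap i j)) :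
    ∀ i k, H i * H k = H k * H i := by
  intro i k
  by_cases hik : i = k
  · subst hik; rfl
  have hzne : ∀ a b : Fin n, a ≠ b → z a - z b ≠ 0 := fun a b h =>
    sub_ne_zero.mpr (fun he => h (hz he))
  set c : Fin n → Fin n → ℂ := fun a b => if b = a then 0 else (z a - z b)⁻¹ with hc
  have hH' : ∀ a, H a = ∑ j, c a j •
      MonoidAlgebra.of ℂ (Equiv.Perm (Fin n)) (Equiv.swap a j) := by
    intro a
    rw [hH a, Finset.sum_filter]
    refine Finset.sum_congr rfl fun j _ => ?_
    by_cases hj : j = a <;> simp [hc, hj]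
  have hprod : ∀ a b, H a * H b = ∑ j, ∑ l, (c a j * c b l) •
      MonoidAlgebra.of ℂ (Equiv.Perm (Fin n)) (Equiv.swap a j * Equiv.swap b l) := by
    intro a b
    rw [hH' a, hH' b, Finset.sum_mul]
    refine Finset.sum_congr rfl fun j _ => ?_
    rw [Finset.mul_sum]
    refine Finset.sum_congr rfl fun l _ => ?_
    rw [smul_mul_smul_comm, ← map_mul]
  set F : Fin n → Fin n → MonoidAlgebra ℂ (Equiv.Perm (Fin n)) := fun j l =>
    (c i j * c k l) • (MonoidAlgebra.of ℂ (Equiv.Perm (Fin n)) (Equiv.swap i j * Equiv.swap k l)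
      - MonoidAlgebra.of ℂ (Equiv.Perm (Fin n)) (Equiv.swap k l * Equiv.swap i j)) with hF
  have hsub : H i * H k - H k * H i = ∑ j, ∑ l, F j l := by
    rw [hprod i k, hprod k i]
    rw [show (∑ j, ∑ l, (c k j * c i l) •
        MonoidAlgebra.of ℂ (Equiv.Perm (Fin n)) (Equiv.swap k j * Equiv.swap i l))
        = ∑ l, ∑ j, (c k j * c i l) •
        MonoidAlgebra.of ℂ (Equiv.Perm (Fin n)) (Equiv.swap k j * Equiv.swap i l)
      from Finset.sum_comm]
    rw [← Finset.sum_sub_distrib]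
    refine Finset.sum_congr rfl fun j _ => ?_
    rw [← Finset.sum_sub_distrib]
    refine Finset.sum_congr rfl fun l _ => ?_
    simp only [hF]
    rw [smul_sub, mul_comm (c k l) (c i j)]
  -- zero lemmas
  have hcii : ∀ a, c a a = 0 := fun a => by simp [hc]
  have hFi : ∀ l, F i l = 0 := by intro l; simp [hF, hcii]
  have hFk : ∀ j, F j k = 0 := by intro j; simp [hF, hcii]
  have hFki : F k i = 0 := by
    simp [hF, Equiv.swap_comm k i]
  have hFdisj : ∀ j l, j ≠ k → l ≠ i → j ≠ l → F j l = 0 := by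
    intro j l h1 h2 h3
    simp only [hF]
    rw [swap_commute' hik (Ne.symm h2) h1 h3, sub_self, smul_zero]
  -- key cancellation
  have hkey : ∀ m, F k m + F m i + F m m = 0 := by
    intro m
    by_cases hmi : m = i
    · rw [hmi]; simp [hFki, hFi]
    by_cases hmk : m = k
    · rw [hmk]; simp [hFki, hFk]
    have him : i ≠ m := Ne.symm hmi
    have hkm : k ≠ m := Ne.symm hmk
    have e1 : Equiv.swap i m * Equiv.swap k i = Equiv.swap i k * Equiv.swap k m :=
      swap_helper1 hik him hkm
    have e1' : Equiv.swap k i * Equiv.swap i m = Equiv.swap k m * Equiv.swap i k := by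
      have := congrArg (·⁻¹) e1
      simpa [mul_inv_rev, Equiv.swap_inv] using this
    have e2 : Equiv.swap i m * Equiv.swap k m = Equiv.swap k m * Equiv.swap i k :=
      swap_helper2 hik him hkm
    have e2' : Equiv.swap k m * Equiv.swap i m = Equiv.swap i k * Equiv.swap k m := by
      have := congrArg (·⁻¹) e2
      simpa [mul_inv_rev, Equiv.swap_inv] using this
    simp only [hF]
    rw [e1, e1', e2, e2']
    have hcik : c i k = (z i - z k)⁻¹ := by simp [hc, Ne.symm hik]
    have hcki : c k i = (z k - z i)⁻¹ := by simp [hc, hik]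
    have hcim : c i m = (z i - z m)⁻¹ := by simp [hc, hmi]
    have hckm : c k m = (z k - z m)⁻¹ := by simp [hc, hmk]
    rw [hcik, hcki, hcim, hckm]
    set X := MonoidAlgebra.of ℂ (Equiv.Perm (Fin n)) (Equiv.swap i k * Equiv.swap k m) with hX
    set Y := MonoidAlgebra.of ℂ (Equiv.Perm (Fin n)) (Equiv.swap k m * Equiv.swap i k) with hY
    have hcoef : (z i - z k)⁻¹ * (z k - z m)⁻¹ + (z i - z m)⁻¹ * (z k - z i)⁻¹
        - (z i - z m)⁻¹ * (z k - z m)⁻¹ = 0 := by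
      have h1 := hzne i k hik
      have h2 := hzne k m hkm
      have h3 := hzne i m him
      have h4 := hzne k i (Ne.symm hik)
      field_simp
      ring
    have hmod : ((z i - z k)⁻¹ * (z k - z m)⁻¹) • (X - Y)
        + ((z i - z m)⁻¹ * (z k - z i)⁻¹) • (X - Y)
        + ((z i - z m)⁻¹ * (z k - z m)⁻¹) • (Y - X)
        = ((z i - z k)⁻¹ * (z k - z m)⁻¹ + (z i - z m)⁻¹ * (z k - z i)⁻¹
            - (z i - z m)⁻¹ * (z k - z m)⁻¹) • (X - Y) := by
      module
    rw [hmod, hcoef, zero_smul]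
  -- line lemma
  have hline : ∀ j, j ≠ k → ∑ l, F j l = F j i + F j j := by
    intro j hjk
    by_cases hji : j = i
    · subst hji; simp [hFi]
    have hij : i ≠ j := Ne.symm hji
    rw [show (Finset.univ : Finset (Fin n)) = insert i (insert j (Finset.univ \ {i, j})) from ?_]
    · rw [Finset.sum_insert, Finset.sum_insert]
      · have hrest : ∑ l ∈ Finset.univ \ {i, j}, F j l = 0 := by
          refine Finset.sum_eq_zero fun l hl => ?_
          simp only [Finset.mem_sdiff, Finset.mem_univ, true_and, Finset.mem_insert,
            Finset.mem_singleton, not_or] at hl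
          obtain ⟨hli, hlj⟩ := hl
          by_cases hlk : l = k
          · subst hlk; exact hFk j
          · exact hFdisj j l hjk hli (Ne.symm hlj)
        rw [hrest, add_zero]
      · simp
      · simp [hij, Ne.symm hij]
    · ext x
      simp only [Finset.mem_insert, Finset.mem_sdiff, Finset.mem_univ, Finset.mem_singleton,
        true_and, not_or]
      by_cases hx1 : x = i <;> by_cases hx2 : x = j <;> simp [hx1, hx2]
  have hmain : ∑ j, ∑ l, F j l = 0 := by
    have step : ∀ j, ∑ l, F j l = F j i + F j j + (if j = k then ∑ l, F k l else 0) := by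
      intro j
      by_cases hj : j = k
      · subst hj; rw [hFki, hFk]; simp
      · rw [hline j hj, if_neg hj, add_zero]
    calc ∑ j, ∑ l, F j l
        = ∑ j, (F j i + F j j + (if j = k then ∑ l, F k l else 0)) :=
          Finset.sum_congr rfl fun j _ => step j
      _ = (∑ j, F j i) + (∑ j, F j j) + ∑ j, (if j = k then ∑ l, F k l else 0) := by
          rw [Finset.sum_add_distrib, Finset.sum_add_distrib]
      _ = (∑ j, F j i) + (∑ j, F j j) + ∑ l, F k l := by
          rw [Finset.sum_ite_eq' Finset.univ k (fun _ => ∑ l, F k l)]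
          simp
      _ = ∑ j, (F k j + F j i + F j j) := by
          rw [Finset.sum_add_distrib, Finset.sum_add_distrib]; abel
      _ = 0 := by
          rw [Finset.sum_congr rfl fun m _ => hkey m]; simp
  exact sub_eq_zero.mp (hsub.trans hmain)
end

section
/- Continuity of the evaluation homomorphisms under gluing points: for fixed pairwise distinct z_1,…,z_k, z ∈ ℂ× and pairwise distinct u_1,…,u_{n−k}, and for every u ∈ U(g_−), lim_{s→0} φ_{z_1,…,z_k, z+su_1,…,z+su_{n−k}}(u) = (D_{k,n} ∘ φ_{z_1,…,z_k,z})(u), where D_{k,n} = id^{⊗k} ⊗ diag_{n−k} : U(g)^{⊗(k+1)} → U(g)^{⊗n} and diag_{n−k} is induced by the diagonal embedding g → g^{⊕(n−k)}. -/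
/-!
Call `u ∈ U(g₋)` good if `φ_s(u) = ∑ fᵢ(s) • vᵢ` for finitely many fixed vectors `vᵢ` and
coefficients with `fᵢ(s) → cᵢ`, where `D(ψ(u)) = ∑ cᵢ • vᵢ`. Unlike weak convergence this is
stable under products (multiply out, the coefficients multiply), so the good elements form a
subalgebra. A generator `X^(m+1) ⊗ x` is good: both sides are combinations of the one-slot vectors
`Yn x i`, with coefficients `pᵢ(s)^(-(m+1))` for the `i`-th evaluation point `pᵢ(s)`, continuous
at `s = 0` because `z₀ ≠ 0`, and `D` sends slot `k` to the sum of slots `k, …, n-1`. The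
generators span `g₋` as a Lie algebra and `ι(g₋)` generates `U(g₋)`, so every element is good,
and applying `ℓ` gives the limit.
-/

open scoped TensorProduct
open Polynomial

noncomputable instance negLoopAux (g : Type*) [LieRing g] [LieAlgebra ℂ g] :
    LieAlgebra ℂ (Polynomial ℂ ⊗[ℂ] g) :=
  { lie_smul := fun c x y => by
      rw [← algebraMap_smul (Polynomial ℂ) c y,
        lie_smul (algebraMap ℂ (Polynomial ℂ) c) x y, algebraMap_smul] }

/-- The Lie algebra `g⁻ = g ⊗ t⁻¹ℂ[t⁻¹]`, realized (with `X = t⁻¹`) as the Lie subalgebra of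
`ℂ[X] ⊗ g` generated by the elements `X^(k+1) ⊗ x`; the generator `X^(k+1) ⊗ x` corresponds
to `x ⊗ t^(-(k+1))`. -/
noncomputable def negLoop (g : Type*) [LieRing g] [LieAlgebra ℂ g] :
    LieSubalgebra ℂ (Polynomial ℂ ⊗[ℂ] g) :=
  LieSubalgebra.lieSpan ℂ (Polynomial ℂ ⊗[ℂ] g)
    {u : Polynomial ℂ ⊗[ℂ] g | ∃ (k : ℕ) (x : g), u = ((X : ℂ[X]) ^ (k + 1)) ⊗ₜ[ℂ] x}

lemma negLoop_gen_mem (g : Type*) [LieRing g] [LieAlgebra ℂ g] (k : ℕ) (x : g) :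
    (((X : ℂ[X]) ^ (k + 1)) ⊗ₜ[ℂ] x) ∈ negLoop g :=
  LieSubalgebra.subset_lieSpan ⟨k, x, rfl⟩

open scoped PiTensorProduct
open Filter Topology

section

variable {α 𝕜 B : Type*} [CommSemiring 𝕜] [TopologicalSpace 𝕜]

variable (𝕜) in
def FinTendsto [AddCommMonoid B] [Module 𝕜 B] (l : Filter α) (x : α → B) (y : B) : Prop :=
  ∃ (ι : Type) (_ : Fintype ι) (f : ι → α → 𝕜) (c : ι → 𝕜) (v : ι → B),
    (∀ i, Tendsto (f i) l (𝓝 (c i))) ∧ (∀ᶠ s in l, x s = ∑ i, f i s • v i) ∧ y = ∑ i, c i • v i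

namespace FinTendsto

section Module

variable [AddCommMonoid B] [Module 𝕜 B] {l : Filter α} {x x' : α → B} {y y' : B}

theorem sum_smul {ι : Type} [Fintype ι] {f : ι → α → 𝕜} {c : ι → 𝕜}
    (hf : ∀ i, Tendsto (f i) l (𝓝 (c i))) (v : ι → B) :
    FinTendsto 𝕜 l (fun s => ∑ i, f i s • v i) (∑ i, c i • v i) :=
  ⟨ι, inferInstance, f, c, v, hf, .of_forall fun _ => rfl, rfl⟩

variable (𝕜) in
theorem const (l : Filter α) (y : B) : FinTendsto 𝕜 l (fun _ => y) y := by
  simpa using sum_smul (ι := Unit) (fun _ => tendsto_const_nhds (x := (1 : 𝕜))) fun _ => y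

theorem congr (h : FinTendsto 𝕜 l x y) (hx : x =ᶠ[l] x') : FinTendsto 𝕜 l x' y := by
  obtain ⟨ι, _, f, c, v, hf, he, rfl⟩ := h
  exact ⟨ι, inferInstance, f, c, v, hf, hx.symm.trans he, rfl⟩

theorem add [ContinuousAdd 𝕜] (h : FinTendsto 𝕜 l x y) (h' : FinTendsto 𝕜 l x' y') :
    FinTendsto 𝕜 l (fun s => x s + x' s) (y + y') := by
  obtain ⟨ι, _, f, c, v, hf, he, rfl⟩ := h
  obtain ⟨ι', _, f', c', v', hf', he', rfl⟩ := h'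
  refine ⟨ι ⊕ ι', inferInstance, Sum.elim f f', Sum.elim c c', Sum.elim v v', ?_, ?_, ?_⟩
  · rintro (i | i)
    exacts [hf i, hf' i]
  · filter_upwards [he, he'] with s hs hs'
    simp [hs, hs', Fintype.sum_sum_type]
  · simp [Fintype.sum_sum_type]

theorem tendsto_apply [ContinuousAdd 𝕜] [ContinuousMul 𝕜] (h : FinTendsto 𝕜 l x y)
    (φ : B →ₗ[𝕜] 𝕜) : Tendsto (fun s => φ (x s)) l (𝓝 (φ y)) := by
  obtain ⟨ι, _, f, c, v, hf, he, rfl⟩ := h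
  have := tendsto_finsetSum Finset.univ fun i _ => (hf i).mul_const (φ (v i))
  refine Tendsto.congr' ?_ (by simpa using this)
  filter_upwards [he] with s hs
  simp [hs]

end Module

theorem mul [ContinuousMul 𝕜] [Semiring B] [Algebra 𝕜 B] {l : Filter α} {x x' : α → B}
    {y y' : B} (h : FinTendsto 𝕜 l x y) (h' : FinTendsto 𝕜 l x' y') :
    FinTendsto 𝕜 l (fun s => x s * x' s) (y * y') := by
  obtain ⟨ι, _, f, c, v, hf, he, rfl⟩ := h
  obtain ⟨ι', _, f', c', v', hf', he', rfl⟩ := h'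
  refine ⟨ι × ι', inferInstance, fun p s => f p.1 s * f' p.2 s, fun p => c p.1 * c' p.2,
    fun p => v p.1 * v' p.2, fun p => (hf p.1).mul (hf' p.2), ?_, ?_⟩
  · filter_upwards [he, he'] with s hs hs'
    simp only [hs, hs', Finset.sum_mul_sum, ← Finset.sum_product', smul_mul_smul_comm]
    rfl
  · simp only [Finset.sum_mul_sum, ← Finset.sum_product', smul_mul_smul_comm]
    rfl

end FinTendsto

def finTendstoSubalgebra {A : Type*} [IsTopologicalSemiring 𝕜] [Semiring A] [Semiring B]
    [Algebra 𝕜 A] [Algebra 𝕜 B] (l : Filter α) (F : α → A →ₐ[𝕜] B) (G : A →ₐ[𝕜] B) :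
    Subalgebra 𝕜 A where
  carrier := {a | FinTendsto 𝕜 l (fun s => F s a) (G a)}
  mul_mem' ha hb := by simpa only [Set.mem_ofPred_eq, map_mul] using ha.mul hb
  add_mem' ha hb := by simpa only [Set.mem_ofPred_eq, map_add] using ha.add hb
  algebraMap_mem' r := by
    simpa only [Set.mem_ofPred_eq, AlgHom.commutes] using FinTendsto.const 𝕜 l (algebraMap 𝕜 B r)

end

namespace UniversalEnvelopingAlgebra

variable {R L : Type*} [CommRing R] [LieRing L] [LieAlgebra R L]

variable (R L) in
theorem adjoin_range_ι : Algebra.adjoin R (Set.range (ι R (L := L))) = ⊤ := by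
  rw [← (AlgHom.range_eq_top (mkAlgHom R L)).mpr (RingCon.mkₐ_surjective _), ← Algebra.map_top,
    ← TensorAlgebra.adjoin_range_ι, AlgHom.map_adjoin, ← Set.range_comp]
  rfl

theorem eq_top_of_forall_ι_mem_lieSpan {s : Set L}
    {S : Subalgebra R (UniversalEnvelopingAlgebra R (LieSubalgebra.lieSpan R L s))}
    (h : ∀ x (hx : x ∈ s), ι R ⟨x, LieSubalgebra.subset_lieSpan hx⟩ ∈ S) : S = ⊤ := by
  let := LieRing.ofAssociativeRing (A := UniversalEnvelopingAlgebra R (LieSubalgebra.lieSpan R L s))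
  let := LieAlgebra.ofAssociativeAlgebra (R := R)
    (A := UniversalEnvelopingAlgebra R (LieSubalgebra.lieSpan R L s))
  have hK : (lieSubalgebraOfSubalgebra R _ S).comap (ι R) = ⊤ := by
    rw [eq_top_iff, ← LieSubalgebra.lieSpan_lieSpan_coe_preimage, LieSubalgebra.lieSpan_le]
    rintro ⟨x, _⟩ hx
    exact h x hx
  rw [eq_top_iff, ← adjoin_range_ι, Algebra.adjoin_le_iff]
  rintro _ ⟨y, rfl⟩
  exact (hK ▸ LieSubalgebra.mem_top y : y ∈ (lieSubalgebraOfSubalgebra R _ S).comap (ι R))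

end UniversalEnvelopingAlgebra

theorem Fin.sum_univ_eq_sum_castLE_add_sum_filter_le {M : Type*} [AddCommMonoid M] {k n : ℕ}
    (hk : k ≤ n) (w : Fin n → M) :
    ∑ i, w i = ∑ j : Fin k, w (Fin.castLE hk j) +
      ∑ i ∈ Finset.univ.filter (fun i : Fin n => k ≤ (i : ℕ)), w i := by
  rw [← Finset.sum_filter_add_sum_filter_not Finset.univ (fun i : Fin n => (i : ℕ) < k)]
  congr 1
  · have : Finset.univ.map (Fin.castLEEmb hk) = Finset.univ.filter (fun i : Fin n => i < k) := by
      ext i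
      simp only [Finset.mem_map, Finset.mem_univ, true_and, Finset.mem_filter, Fin.coe_castLEEmb]
      exact ⟨fun ⟨j, hj⟩ => hj ▸ j.2, fun h => ⟨⟨i, h⟩, rfl⟩⟩
    rw [← this, Finset.sum_map]
    rfl
  · simp [not_lt]

theorem LinearMap.map_sum_smul_eq_sum_smul_clamp {𝕜 M N : Type*} [Semiring 𝕜] [AddCommMonoid M]
    [Module 𝕜 M] [AddCommMonoid N] [Module 𝕜 N] {k n : ℕ} (hk : k ≤ n) (D : M →ₗ[𝕜] N)
    (Y : Fin (k + 1) → M) (Y' : Fin n → N)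
    (hD : ∀ j : Fin k, D (Y j.castSucc) = Y' (Fin.castLE hk j))
    (hDlast : D (Y (Fin.last k)) = ∑ i ∈ Finset.univ.filter (fun i : Fin n => k ≤ (i : ℕ)), Y' i)
    (a : Fin (k + 1) → 𝕜) :
    D (∑ i, a i • Y i) = ∑ i : Fin n, a (Fin.clamp i k) • Y' i := by
  rw [Fin.sum_univ_eq_sum_castLE_add_sum_filter_le hk, map_sum, Fin.sum_univ_castSucc]
  simp only [map_smul, hD, hDlast, Finset.smul_sum]
  congr 1
  · refine Finset.sum_congr rfl fun j _ => ?_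
    congr 2
    ext
    simp [Fin.clamp]
  · refine Finset.sum_congr rfl fun i hi => ?_
    congr 2
    ext
    simpa [Fin.clamp] using (Finset.mem_filter.mp hi).2

open Classical in
/-- continuity of the evaluation homomorphisms under gluing of points:
as `s → 0`, `φ_{z_1,…,z_k,z₀+s·c_1,…,z₀+s·c_{n-k}} → D_{k,n} ∘ φ_{z_1,…,z_k,z₀}` (weakly,
i.e. composed with any linear functional), where `D_{k,n} = id^⊗k ⊗ diag_{n-k}`. -/
theorem evaluation_tendsto_glued
    (g : Type*) [LieRing g] [LieAlgebra ℂ g]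
    (n k : ℕ) (hk : k ≤ n)
    (z : Fin k → ℂ) (z₀ : ℂ) (c : Fin (n - k) → ℂ)
    (hz₀0 : z₀ ≠ 0)
    -- the one-slot embeddings of `g` into `U(g)^⊗(k+1)` and `U(g)^⊗n`
    (Yk : g → Fin (k + 1) → ⨂[ℂ] (_ : Fin (k + 1)), UniversalEnvelopingAlgebra ℂ g)
    (Yn : g → Fin n → ⨂[ℂ] (_ : Fin n), UniversalEnvelopingAlgebra ℂ g)
    -- the family of evaluation homomorphisms at `z_1, …, z_k, z₀+s·c_1, …, z₀+s·c_{n-k}`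
    (φ : ℂ → (UniversalEnvelopingAlgebra ℂ (negLoop g) →ₐ[ℂ]
      ⨂[ℂ] (_ : Fin n), UniversalEnvelopingAlgebra ℂ g))
    (hφ : ∀ s : ℂ, (∀ j, z₀ + s * c j ≠ 0) → ∀ (m : ℕ) (x : g),
      φ s (UniversalEnvelopingAlgebra.ι ℂ
          (⟨((X : ℂ[X]) ^ (m + 1)) ⊗ₜ[ℂ] x, negLoop_gen_mem g m x⟩ : negLoop g))
        = ∑ i : Fin n,
            ((if h : (i : ℕ) < k then z ⟨i, h⟩
              else z₀ + s * c ⟨(i : ℕ) - k, by omega⟩) ^ (m + 1))⁻¹ • Yn x i)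
    -- the evaluation homomorphism at `z_1, …, z_k, z₀`
    (ψ : UniversalEnvelopingAlgebra ℂ (negLoop g) →ₐ[ℂ]
      ⨂[ℂ] (_ : Fin (k + 1)), UniversalEnvelopingAlgebra ℂ g)
    (hψ : ∀ (m : ℕ) (x : g),
      ψ (UniversalEnvelopingAlgebra.ι ℂ
          (⟨((X : ℂ[X]) ^ (m + 1)) ⊗ₜ[ℂ] x, negLoop_gen_mem g m x⟩ : negLoop g))
        = ∑ i : Fin (k + 1),
            ((if h : (i : ℕ) < k then z ⟨i, h⟩ else z₀) ^ (m + 1))⁻¹ • Yk x i)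
    -- the homomorphism `D_{k,n} = id^⊗k ⊗ diag_{n-k}`
    (D : (⨂[ℂ] (_ : Fin (k + 1)), UniversalEnvelopingAlgebra ℂ g) →ₐ[ℂ]
      ⨂[ℂ] (_ : Fin n), UniversalEnvelopingAlgebra ℂ g)
    (hD1 : ∀ (x : g) (j : Fin (k + 1)) (h : (j : ℕ) < k),
      D (Yk x j) = Yn x ⟨(j : ℕ), by omega⟩)
    (hD2 : ∀ x : g, D (Yk x ⟨k, Nat.lt_succ_self k⟩)
      = ∑ i ∈ Finset.univ.filter (fun i : Fin n => k ≤ (i : ℕ)), Yn x i) :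
    ∀ u : UniversalEnvelopingAlgebra ℂ (negLoop g),
      ∀ ℓ : (⨂[ℂ] (_ : Fin n), UniversalEnvelopingAlgebra ℂ g) →ₗ[ℂ] ℂ,
        Tendsto (fun s : ℂ => ℓ (φ s u)) (𝓝[≠] (0 : ℂ)) (𝓝 (ℓ (D (ψ u)))) := by
  let p : Fin n → ℂ → ℂ := fun i s =>
    if h : (i : ℕ) < k then z ⟨i, h⟩ else z₀ + s * c ⟨(i : ℕ) - k, by omega⟩
  have hp_ne : ∀ᶠ s in 𝓝 (0 : ℂ), ∀ j, z₀ + s * c j ≠ 0 :=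
    eventually_all.2 fun j => (by fun_prop : Continuous fun s : ℂ => z₀ + s * c j).continuousAt
      |>.eventually_ne (by simpa using hz₀0)
  have hcoef : ∀ m i, Tendsto (fun s => (p i s ^ (m + 1))⁻¹) (𝓝 0) (𝓝 (p i 0 ^ (m + 1))⁻¹) := by
    intro m i
    by_cases h : (i : ℕ) < k
    · simp [p, h]
    · simp only [p, dif_neg h]
      exact (((by fun_prop : Continuous fun s : ℂ => z₀ + s * c _).tendsto 0).pow (m + 1)).inv₀
        (by simpa using hz₀0)
  let gen (m : ℕ) (x : g) : UniversalEnvelopingAlgebra ℂ (negLoop g) :=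
    UniversalEnvelopingAlgebra.ι ℂ ⟨((X : ℂ[X]) ^ (m + 1)) ⊗ₜ[ℂ] x, negLoop_gen_mem g m x⟩
  have hgen : ∀ m x, gen m x ∈ finTendstoSubalgebra (𝓝 0) φ (D.comp ψ) := by
    intro m x
    have hlim : D (ψ (gen m x)) = ∑ i, (p i 0 ^ (m + 1))⁻¹ • Yn x i := by
      rw [show ψ (gen m x) = _ from hψ m x, ← D.coe_toLinearMap,
        LinearMap.map_sum_smul_eq_sum_smul_clamp hk _ _ (Yn x)
          (fun j => hD1 x j.castSucc j.isLt) (hD2 x)]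
      refine Finset.sum_congr rfl fun i _ => ?_
      by_cases h : (i : ℕ) < k
      · simp [p, Fin.clamp, h, h.le]
      · simp [p, Fin.clamp, h]
    change FinTendsto ℂ (𝓝 0) (fun s => φ s (gen m x)) (D (ψ (gen m x)))
    rw [hlim]
    refine (FinTendsto.sum_smul (hcoef m) (Yn x)).congr ?_
    filter_upwards [hp_ne] with s hs
    exact (hφ s hs m x).symm
  have htop : finTendstoSubalgebra (𝓝 0) φ (D.comp ψ) = ⊤ :=
    UniversalEnvelopingAlgebra.eq_top_of_forall_ι_mem_lieSpan fun _ ⟨m, x, hmx⟩ => hmx ▸ hgen m x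
  intro u ℓ
  exact ((htop ▸ Algebra.mem_top : u ∈ _).tendsto_apply ℓ).mono_left nhdsWithin_le_nhds
end

section
/- The symmetrized classical bending-flow Hamiltonians Poisson commute in degree 2: for X_1,…,X_n matrix variables, the functions F_k(X_1,…,X_n) = Tr((X_k + X_{k+1} + … + X_n)^2) on gl_N^{⊕n}, k = 1,…,n, pairwise Poisson commute with respect to the product Lie–Poisson structure on S(gl_N)^{⊗n}. -/
open Finset MvPolynomial

private noncomputable def Yd (N n : ℕ) (p : Fin n) (a b : Fin N) : MvPolynomial (Fin n × Fin N × Fin N) ℂ :=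
  ∑ i ∈ Finset.univ.filter (fun i : Fin n => p ≤ i), MvPolynomial.X (i, a, b)

private lemma bending_aux
    (N n : ℕ)
    (B : MvPolynomial (Fin n × Fin N × Fin N) ℂ →ₗ[ℂ]
      MvPolynomial (Fin n × Fin N × Fin N) ℂ →ₗ[ℂ] MvPolynomial (Fin n × Fin N × Fin N) ℂ)
    (hleib : ∀ f h₁ h₂, B f (h₁ * h₂) = B f h₁ * h₂ + h₁ * B f h₂)
    (hskew : ∀ f h, B f h = - B h f)
    (hgen : ∀ (i j : Fin n) (a b c d : Fin N),
      B (MvPolynomial.X (i, a, b)) (MvPolynomial.X (j, c, d))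
        = if i = j then
            ((if b = c then MvPolynomial.X (i, a, d) else 0)
              - (if d = a then MvPolynomial.X (i, c, b) else 0))
          else 0)
    (F : Fin n → MvPolynomial (Fin n × Fin N × Fin N) ℂ)
    (hF : ∀ k, F k = ∑ a : Fin N, ∑ b : Fin N,
      (∑ i ∈ Finset.univ.filter (fun i : Fin n => k ≤ i), MvPolynomial.X (i, a, b)) *
      (∑ i ∈ Finset.univ.filter (fun i : Fin n => k ≤ i), MvPolynomial.X (i, b, a)))
    (k m : Fin n) (hkm : k ≤ m) : B (F k) (F m) = 0 := by
  classical
  have Ydef : ∀ (p : Fin n) (a b : Fin N),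
      (∑ i ∈ Finset.univ.filter (fun i : Fin n => p ≤ i), MvPolynomial.X (i, a, b))
        = Yd N n p a b := fun _ _ _ => rfl
  set Sm := Finset.univ.filter (fun i : Fin n => m ≤ i) with hSm
  set Sk := Finset.univ.filter (fun i : Fin n => k ≤ i) with hSk
  -- bracket of a generator with Y m
  have hXY : ∀ (i : Fin n) (a b c d : Fin N),
      B (MvPolynomial.X (i, a, b)) (Yd N n m c d)
        = if i ∈ Sm then
            ((if b = c then MvPolynomial.X (i, a, d) else 0)
              - (if d = a then MvPolynomial.X (i, c, b) else 0))
          else 0 := by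
    intro i a b c d
    rw [Yd, map_sum]
    simp_rw [hgen]
    rw [Finset.sum_ite_eq]
  have hYY : ∀ (a b c d : Fin N),
      B (Yd N n k a b) (Yd N n m c d)
        = (if b = c then Yd N n m a d else 0) - (if d = a then Yd N n m c b else 0) := by
    intro a b c d
    have h1 : B (Yd N n k a b) = ∑ i ∈ Sk, B (MvPolynomial.X (i, a, b)) := by
      rw [Yd, map_sum]
    rw [h1, LinearMap.sum_apply]
    simp_rw [hXY]
    rw [Finset.sum_ite_mem]
    have hSkSm : Sk ∩ Sm = Sm := by
      ext i
      simp only [Finset.mem_inter, hSk, hSm, Finset.mem_filter, Finset.mem_univ, true_and]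
      exact ⟨fun h => h.2, fun h => ⟨le_trans hkm h, h⟩⟩
    rw [hSkSm, Finset.sum_sub_distrib]
    congr 1 <;> split_ifs <;> simp [Yd, hSm]
  -- B (Y k a b) (F m) = 0
  have hYF : ∀ a b : Fin N, B (Yd N n k a b) (F m) = 0 := by
    intro a b
    rw [hF m]
    simp_rw [Ydef]
    rw [map_sum]
    simp_rw [map_sum, hleib, hYY]
    have expand : ∀ c d : Fin N,
        ((if b = c then Yd N n m a d else 0) - (if d = a then Yd N n m c b else 0)) * Yd N n m d c
          + Yd N n m c d *
            ((if b = d then Yd N n m a c else 0) - (if c = a then Yd N n m d b else 0))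
        = ((if b = c then Yd N n m a d * Yd N n m d c else 0)
            - (if d = a then Yd N n m c b * Yd N n m a c else 0))
          + ((if b = d then Yd N n m c b * Yd N n m a c else 0)
            - (if c = a then Yd N n m a d * Yd N n m d b else 0)) := by
      intro c d
      split_ifs with h1 h2 h3 h4 <;> subst_eqs <;> ring
    simp_rw [expand]
    simp only [Finset.sum_add_distrib, Finset.sum_sub_distrib]
    have e1 : (∑ c : Fin N, ∑ d : Fin N,
        if b = c then Yd N n m a d * Yd N n m d c else 0)
        = ∑ d : Fin N, Yd N n m a d * Yd N n m d b := by
      rw [Finset.sum_comm]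
      simp [Finset.sum_ite_eq]
    have e2 : (∑ c : Fin N, ∑ d : Fin N,
        if d = a then Yd N n m c b * Yd N n m a c else 0)
        = ∑ c : Fin N, Yd N n m c b * Yd N n m a c := by
      simp [Finset.sum_ite_eq']
    have e3 : (∑ c : Fin N, ∑ d : Fin N,
        if b = d then Yd N n m c b * Yd N n m a c else 0)
        = ∑ c : Fin N, Yd N n m c b * Yd N n m a c := by
      simp [Finset.sum_ite_eq]
    have e4 : (∑ c : Fin N, ∑ d : Fin N,
        if c = a then Yd N n m a d * Yd N n m d b else 0)
        = ∑ d : Fin N, Yd N n m a d * Yd N n m d b := by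
      rw [Finset.sum_comm]
      simp [Finset.sum_ite_eq']
    rw [e1, e2, e3, e4]
    ring
  -- Leibniz in the first argument
  have hleib1 : ∀ f g h, B (f * g) h = B f h * g + f * B g h := by
    intro f g h
    rw [hskew (f * g) h, hleib h f g, hskew h f, hskew h g]
    ring
  rw [hF k]
  simp_rw [Ydef]
  rw [map_sum, LinearMap.sum_apply]
  refine Finset.sum_eq_zero fun a _ => ?_
  rw [map_sum, LinearMap.sum_apply]
  refine Finset.sum_eq_zero fun b _ => ?_
  rw [hleib1, hYF a b, hYF b a]
  ring

open Classical in
/-- the quadratic bending-flow Hamiltonians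
`F_k = Tr((X_k + … + X_n)^2)` pairwise Poisson commute in `S(gl_N)^⊗n`, realized as the
polynomial algebra on the matrix entries `x i a b = (X_i)_{ab}`, with the Lie–Poisson bracket
determined by `{x^{(i)}, y^{(j)}} = δ_{ij} [x,y]^{(i)}` (a skew bracket which is a derivation in
each argument and satisfies `{e_{ab}^{(i)}, e_{cd}^{(j)}} = δ_{ij}(δ_{bc} e_{ad}^{(i)} -
δ_{da} e_{cb}^{(i)})` on generators). -/
theorem bending_flow_quadratic_hamiltonians_poisson_commute
    (N n : ℕ)
    (B : MvPolynomial (Fin n × Fin N × Fin N) ℂ →ₗ[ℂ]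
      MvPolynomial (Fin n × Fin N × Fin N) ℂ →ₗ[ℂ] MvPolynomial (Fin n × Fin N × Fin N) ℂ)
    (hskew : ∀ f h, B f h = - B h f)
    (hleib : ∀ f h₁ h₂, B f (h₁ * h₂) = B f h₁ * h₂ + h₁ * B f h₂)
    (hgen : ∀ (i j : Fin n) (a b c d : Fin N),
      B (MvPolynomial.X (i, a, b)) (MvPolynomial.X (j, c, d))
        = if i = j then
            ((if b = c then MvPolynomial.X (i, a, d) else 0)
              - (if d = a then MvPolynomial.X (i, c, b) else 0))
          else 0)
    (F : Fin n → MvPolynomial (Fin n × Fin N × Fin N) ℂ)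
    (hF : ∀ k, F k = ∑ a : Fin N, ∑ b : Fin N,
      (∑ i ∈ Finset.univ.filter (fun i : Fin n => k ≤ i), MvPolynomial.X (i, a, b)) *
      (∑ i ∈ Finset.univ.filter (fun i : Fin n => k ≤ i), MvPolynomial.X (i, b, a))) :
    ∀ k m, B (F k) (F m) = 0 := by
  intro k m
  rcases le_total k m with h | h
  · exact bending_aux N n B hleib hskew hgen F hF k m h
  · rw [hskew, bending_aux N n B hleib hskew hgen F hF m k h, neg_zero]
end

section
/- The quadratic shift-of-argument elements commute: for a regular diagonal matrix Z = diag(z_1,…,z_M) with distinct entries, the elements q_h = Σ_{1 ≤ i < j ≤ M} (h_i − h_j)/(z_i − z_j) · e_{ij} e_{ji} ∈ U(gl_M), indexed by diagonal matrices h = diag(h_1,…,h_M), pairwise commute: q_h q_{h'} = q_{h'} q_h for all diagonal h, h'. -/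
attribute [local instance 100] LieRing.ofAssociativeRing

/-!
Write `C_ij = e_ij e_ji` and `Q_c = Σ_{i,j} c_ij C_ij` for a symmetric `c` with `c_ii = 0` (for the
divided differences `c_ij = (h_i - h_j) / (z_i - z_j)` this is Lean's `x / 0 = 0`). Since
`C_ji = C_ij - (e_ii - e_jj)`, `2 q_h` is `Q_c` plus a diagonal element, and diagonal elements
commute with every `C_ij`; so it suffices that `Q_c` and `Q_c'` commute.
From `[Q_c, e_kl] = Σ_m (c_km - c_lm) (e_km e_ml + e_ml e_km)` one gets
`[Q_c, Q_c'] = 2 Σ_{k,l,m} c'_kl (c_km - c_lm) X_klm` with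
`X_klm = e_km e_ml e_lk - e_kl e_lm e_mk`, which is invariant under cyclic rotation of `(k, l, m)`.
Averaging with `-[Q_c', Q_c]` and over the rotations, the commutator vanishes because the cyclic sum
of `c'_kl (c_km - c_lm) - c_kl (c'_km - c'_lm)` is zero for divided differences with distinct
nodes `z_i`.
-/

open Finset

theorem sum_smul_eq_zero_of_cyclic {K V ι : Type*} [Field K] [CharZero K] [AddCommGroup V]
    [Module K V] [Fintype ι] (f : ι → ι → ι → K) (X : ι → ι → ι → V)
    (hX : ∀ a b c, X a b c = X b c a) (hf : ∀ a b c, f a b c + f b c a + f c a b = 0) :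
    ∑ a, ∑ b, ∑ c, f a b c • X a b c = 0 := by
  have rotate (g : ι → ι → ι → V) : ∑ a, ∑ b, ∑ c, g b c a = ∑ a, ∑ b, ∑ c, g a b c :=
    sum_comm.trans (sum_congr rfl fun _ _ => sum_comm)
  have h : (3 : K) • ∑ a, ∑ b, ∑ c, f a b c • X a b c = 0 := calc
    _ = ∑ a, ∑ b, ∑ c, f a b c • X a b c + ∑ a, ∑ b, ∑ c, f b c a • X b c a +
          ∑ a, ∑ b, ∑ c, f c a b • X c a b := by
      rw [rotate fun a b c => f b c a • X b c a, rotate fun a b c => f a b c • X a b c]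
      module
    _ = ∑ a, ∑ b, ∑ c, (f a b c + f b c a + f c a b) • X a b c := by
      simp only [← hX, add_smul, sum_add_distrib]
    _ = 0 := by simp only [hf, zero_smul, sum_const_zero]
  exact (smul_eq_zero.mp h).resolve_left three_ne_zero

theorem sum_filter_lt_add_swap {ι M : Type*} [LinearOrder ι] [Fintype ι] [AddCommMonoid M]
    (f : ι → ι → M) (hf : ∀ i, f i i = 0) :
    ∑ p ∈ univ.filter (fun p : ι × ι => p.1 < p.2), (f p.1 p.2 + f p.2 p.1) =
      ∑ i, ∑ j, f i j := by
  rw [sum_add_distrib, sum_filter, sum_filter, ← Fintype.sum_prod_type',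
    ← (Equiv.prodComm ι ι).sum_comp (fun p => if p.1 < p.2 then f p.2 p.1 else 0),
    ← sum_add_distrib]
  refine sum_congr rfl fun p _ => ?_
  rcases lt_trichotomy p.1 p.2 with h | h | h
  · simp [h, h.not_gt]
  · simp [h, hf]
  · simp [h, h.not_gt]

section Coefficients

variable {K ι : Type*} [Field K]

def divDiff (z h : ι → K) (i j : ι) : K := (h i - h j) / (z i - z j)

theorem divDiff_comm (z h : ι → K) (i j : ι) : divDiff z h i j = divDiff z h j i := by
  rw [divDiff, divDiff, ← neg_div_neg_eq, neg_sub, neg_sub]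

theorem divDiff_self (z h : ι → K) (i : ι) : divDiff z h i i = 0 := by
  simp [divDiff]

def commutatorCoeff (c c' : ι → ι → K) (k l m : ι) : K :=
  c' k l * (c k m - c l m) - c k l * (c' k m - c' l m)

theorem commutatorCoeff_divDiff_cyclic {z : ι → K} (hz : Function.Injective z) (h h' : ι → K)
    (k l m : ι) : commutatorCoeff (divDiff z h) (divDiff z h') k l m +
      commutatorCoeff (divDiff z h) (divDiff z h') l m k +
      commutatorCoeff (divDiff z h) (divDiff z h') m k l = 0 := by
  rcases eq_or_ne k l with rfl | hkl
  · simp only [commutatorCoeff, divDiff_self, divDiff_comm z _ m k]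
    ring
  rcases eq_or_ne l m with rfl | hlm
  · simp only [commutatorCoeff, divDiff_self, divDiff_comm z _ l k]
    ring
  rcases eq_or_ne m k with rfl | hmk
  · simp only [commutatorCoeff, divDiff_self, divDiff_comm z _ l m]
    ring
  have hne {a b : ι} (hab : a ≠ b) : z a - z b ≠ 0 := sub_ne_zero.mpr (hz.ne hab)
  simp only [commutatorCoeff, divDiff]
  field_simp [hne hkl, hne hlm, hne hmk, hne hkl.symm, hne hlm.symm, hne hmk.symm]
  ring

end Coefficients

section Elements

variable {A n K : Type*} [Ring A] [Field K] [Algebra K A]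

def cubic (E : n → n → A) (k l m : n) : A := E k m * E m l * E l k - E k l * E l m * E m k

def quadratic [Fintype n] (E : n → n → A) (c : n → n → K) : A :=
  ∑ i, ∑ j, c i j • (E i j * E j i)

def orderedQuadratic [Fintype n] [LinearOrder n] (E : n → n → A) (c : n → n → K) : A :=
  ∑ p ∈ univ.filter (fun p : n × n => p.1 < p.2), c p.1 p.2 • (E p.1 p.2 * E p.2 p.1)

theorem commute_sum_smul_diag_sub {E : n → n → A} {x : A} (hx : ∀ m, Commute (E m m) x)
    (s : Finset (n × n)) (a : n × n → K) :
    Commute (∑ p ∈ s, a p • (E p.1 p.1 - E p.2 p.2)) x :=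
  Commute.sum_left _ _ _ fun p _ => ((hx p.1).sub_left (hx p.2)).smul_left _

end Elements

section

variable {A : Type*} [Ring A] {n : Type*} [DecidableEq n]

def GlRelations (E : n → n → A) : Prop :=
  ∀ i j k l, E i j * E k l - E k l * E i j =
    (if j = k then E i l else 0) - (if l = i then E k j else 0)

theorem glRelations_ι (R : Type*) [CommRing R] [Fintype n] :
    GlRelations fun i j : n => UniversalEnvelopingAlgebra.ι R (Matrix.single i j (1 : R)) := by
  intro i j k l
  rw [← Ring.lie_def, ← LieHom.map_lie, Ring.lie_def]
  by_cases hjk : j = k <;> by_cases hli : l = i <;>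
    simp [hjk, hli, Matrix.single_mul_single_of_ne]

namespace GlRelations

variable {E : n → n → A}

theorem commute_diag (hE : GlRelations E) (i k : n) : Commute (E i i) (E k k) := by
  have h := hE i i k k
  by_cases hik : i = k
  · subst hik; exact Commute.refl _
  · rw [if_neg hik, if_neg (Ne.symm hik), sub_zero, sub_eq_zero] at h
    exact h

theorem commute_diag_mul_swap (hE : GlRelations E) (m i j : n) :
    Commute (E m m) (E i j * E j i) := by
  have h : E m m * (E i j * E j i) - E i j * E j i * E m m =
      (E m m * E i j - E i j * E m m) * E j i + E i j * (E m m * E j i - E j i * E m m) := by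
    noncomm_ring
  rw [hE, hE] at h
  refine sub_eq_zero.mp (h.trans ?_)
  split_ifs <;> subst_vars <;> first | contradiction | noncomm_ring

theorem cubic_rotate (hE : GlRelations E) (k l m : n) : cubic E k l m = cubic E l m k := by
  rcases eq_or_ne m k with rfl | hmk
  · simp only [cubic, sub_self, mul_assoc, (hE.commute_diag_mul_swap m m l).eq]
  rcases eq_or_ne l m with rfl | hlm
  · simp only [cubic, sub_self, mul_assoc, (hE.commute_diag_mul_swap l l k).eq]
  have h₁ := hE m l l k
  have h₂ := hE k m l k
  have h₃ := hE k l l m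
  have h₄ := hE k l m k
  simp only [if_true, if_neg hmk, if_neg hmk.symm, if_neg hlm, if_neg hlm.symm] at h₁ h₂ h₃ h₄
  unfold cubic
  linear_combination (norm := noncomm_ring)
    E k m * h₁ + h₂ * E m l - h₃ * E m k - E l m * h₄

theorem two_mul_cubic (hE : GlRelations E) (k l m : n) :
    2 * cubic E k l m = E k m * E m l * E l k + E m l * E k m * E l k -
      E k l * E l m * E m k - E k l * E m k * E l m := by
  rcases eq_or_ne k l with rfl | hkl
  · unfold cubic
    linear_combination (norm := noncomm_ring)
      (hE.commute_diag_mul_swap k m k).eq - (hE.commute_diag_mul_swap k k m).eq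
  have h₁ := hE m l k m
  have h₂ := hE m k l m
  simp only [if_true, if_neg hkl, if_neg hkl.symm] at h₁ h₂
  unfold cubic
  linear_combination (norm := noncomm_ring) E k l * h₂ - h₁ * E l k

variable {K : Type*} [Field K] [Algebra K A] [Fintype n]

theorem quadratic_commutator_single (hE : GlRelations E) {c : n → n → K} (hc : ∀ i j, c i j = c j i)
    (k l : n) : quadratic E c * E k l - E k l * quadratic E c =
      ∑ m, (c k m - c l m) • (E k m * E m l + E m l * E k m) := by
  have h (i j : n) : E i j * E j i * E k l - E k l * (E i j * E j i) =
      E i j * (E j i * E k l - E k l * E j i) + (E i j * E k l - E k l * E i j) * E j i := by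
    noncomm_ring
  simp only [quadratic, sum_mul, mul_sum, smul_mul_assoc, mul_smul_comm, ← sum_sub_distrib,
    ← smul_sub, h, hE _ _ k l]
  simp only [mul_sub, sub_mul, mul_ite, ite_mul, mul_zero, zero_mul, smul_add, smul_sub, smul_ite,
    smul_zero, sum_add_distrib, sum_sub_distrib, sum_ite_irrel, sum_const_zero, sum_ite_eq,
    sum_ite_eq', mem_univ, if_true]
  simp only [sub_smul, sum_sub_distrib, hc _ k, hc _ l]
  abel

theorem quadratic_commutator_pair (hE : GlRelations E) {c : n → n → K} (hc : ∀ i j, c i j = c j i)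
    (k l : n) : quadratic E c * (E k l * E l k) - E k l * E l k * quadratic E c =
      (2 : K) • ∑ m, (c k m - c l m) • cubic E k l m := by
  have h : quadratic E c * (E k l * E l k) - E k l * E l k * quadratic E c =
      (quadratic E c * E k l - E k l * quadratic E c) * E l k +
        E k l * (quadratic E c * E l k - E l k * quadratic E c) := by
    noncomm_ring
  rw [h, hE.quadratic_commutator_single hc k l, hE.quadratic_commutator_single hc l k, sum_mul,
    mul_sum, ← sum_add_distrib, smul_sum]
  refine sum_congr rfl fun m _ => ?_
  rw [smul_mul_assoc, mul_smul_comm, ← neg_sub (c k m), neg_smul, ← sub_eq_add_neg, ← smul_sub,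
    smul_comm, two_smul, ← two_mul, hE.two_mul_cubic]
  congr 1
  noncomm_ring

theorem quadratic_commutator_quadratic (hE : GlRelations E) {c : n → n → K}
    (hc : ∀ i j, c i j = c j i) (c' : n → n → K) :
    quadratic E c * quadratic E c' - quadratic E c' * quadratic E c =
      (2 : K) • ∑ k, ∑ l, ∑ m, (c' k l * (c k m - c l m)) • cubic E k l m := by
  have h : quadratic E c' = ∑ k, ∑ l, c' k l • (E k l * E l k) := rfl
  simp only [h, mul_sum, sum_mul, ← sum_sub_distrib, mul_smul_comm, smul_mul_assoc, ← smul_sub,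
    hE.quadratic_commutator_pair hc, smul_sum, smul_smul, mul_left_comm (2 : K)]

theorem commute_quadratic [CharZero K] (hE : GlRelations E) {c c' : n → n → K}
    (hc : ∀ i j, c i j = c j i) (hc' : ∀ i j, c' i j = c' j i)
    (hcyc : ∀ k l m, commutatorCoeff c c' k l m + commutatorCoeff c c' l m k +
      commutatorCoeff c c' m k l = 0) :
    Commute (quadratic E c) (quadratic E c') := by
  rw [Commute, SemiconjBy, ← sub_eq_zero]
  refine smul_right_injective A (two_ne_zero (α := K)) ?_
  calc (2 : K) • (quadratic E c * quadratic E c' - quadratic E c' * quadratic E c)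
      = (quadratic E c * quadratic E c' - quadratic E c' * quadratic E c) -
          (quadratic E c' * quadratic E c - quadratic E c * quadratic E c') := by module
    _ = (2 : K) • ∑ k, ∑ l, ∑ m, commutatorCoeff c c' k l m • cubic E k l m := by
      simp only [hE.quadratic_commutator_quadratic hc, hE.quadratic_commutator_quadratic hc',
        ← smul_sub, ← sum_sub_distrib, ← sub_smul, commutatorCoeff]
    _ = (2 : K) • 0 := by rw [sum_smul_eq_zero_of_cyclic _ _ hE.cubic_rotate hcyc]

theorem commute_diag_quadratic (hE : GlRelations E) (m : n) (c : n → n → K) :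
    Commute (E m m) (quadratic E c) :=
  Commute.sum_right _ _ _ fun i _ => Commute.sum_right _ _ _ fun j _ =>
    (hE.commute_diag_mul_swap m i j).smul_right _

theorem two_smul_orderedQuadratic [LinearOrder n] (hE : GlRelations E) {c : n → n → K}
    (hc : ∀ i j, c i j = c j i) (hc₀ : ∀ i, c i i = 0) :
    (2 : K) • orderedQuadratic E c = quadratic E c +
      ∑ p ∈ univ.filter (fun p : n × n => p.1 < p.2), c p.1 p.2 • (E p.1 p.1 - E p.2 p.2) := by
  rw [quadratic, ← sum_filter_lt_add_swap (fun i j => c i j • (E i j * E j i)) (by simp [hc₀]),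
    orderedQuadratic, smul_sum, ← sum_add_distrib]
  refine sum_congr rfl fun p _ => ?_
  have h := hE p.1 p.2 p.2 p.1
  simp only [if_true] at h
  rw [hc p.2 p.1, ← h]
  module

theorem commute_orderedQuadratic_divDiff [CharZero K] [LinearOrder n] (hE : GlRelations E)
    {z : n → K} (hz : Function.Injective z) (h h' : n → K) :
    Commute (orderedQuadratic E (divDiff z h)) (orderedQuadratic E (divDiff z h')) := by
  set D : (n → K) → A := fun h => ∑ p ∈ univ.filter (fun p : n × n => p.1 < p.2),
    divDiff z h p.1 p.2 • (E p.1 p.1 - E p.2 p.2)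
  have hq (h : n → K) :
      orderedQuadratic E (divDiff z h) = (2 : K)⁻¹ • (quadratic E (divDiff z h) + D h) := by
    rw [← hE.two_smul_orderedQuadratic (divDiff_comm z h) (divDiff_self z h),
      inv_smul_smul₀ two_ne_zero]
  have hdiag (h : n → K) (m : n) : Commute (E m m) (quadratic E (divDiff z h) + D h) :=
    (hE.commute_diag_quadratic m _).add_right
      (commute_sum_smul_diag_sub (fun k => hE.commute_diag k m) _ _).symm
  have hQQ : Commute (quadratic E (divDiff z h)) (quadratic E (divDiff z h')) :=
    hE.commute_quadratic (divDiff_comm z h) (divDiff_comm z h')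
      (commutatorCoeff_divDiff_cyclic hz h h')
  rw [hq, hq]
  refine ((Commute.add_left ?_ (commute_sum_smul_diag_sub (hdiag h') _ _)).smul_left _).smul_right _
  exact hQQ.add_right
    (commute_sum_smul_diag_sub (fun m => hE.commute_diag_quadratic m _) _ _).symm

end GlRelations

end

open Classical in
/-- the quadratic shift-of-argument elements
`q_h = Σ_{i<j} ((h_i - h_j)/(z_i - z_j)) e_{ij} e_{ji} ∈ U(gl_M)`, indexed by diagonal matrices
`h = diag(h_1,…,h_M)`, pairwise commute (for a regular diagonal `Z = diag(z_1,…,z_M)` with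
pairwise distinct entries). -/
theorem shift_of_argument_quadratic_commute
    (M : ℕ) (z : Fin M → ℂ) (hz : Function.Injective z)
    (q : (Fin M → ℂ) → UniversalEnvelopingAlgebra ℂ (Matrix (Fin M) (Fin M) ℂ))
    (hq : ∀ h : Fin M → ℂ, q h = ∑ p ∈ Finset.univ.filter
        (fun p : Fin M × Fin M => p.1 < p.2),
      ((h p.1 - h p.2) / (z p.1 - z p.2)) •
        (UniversalEnvelopingAlgebra.ι ℂ (Matrix.single p.1 p.2 (1 : ℂ)) *
         UniversalEnvelopingAlgebra.ι ℂ (Matrix.single p.2 p.1 (1 : ℂ)))) :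
    ∀ h h' : Fin M → ℂ, q h * q h' = q h' * q h := by
  intro h h'
  rw [hq h, hq h']
  exact ((glRelations_ι ℂ).commute_orderedQuadratic_divDiff hz h h').eq
end
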